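/- arXiv:2507.20597 — 4 statements merged into one kernel-verified Lean document; each statement's English description precedes it below -/
import Mathlib

section
/- Weighted Hölder comparison of energies: let X, Y ⊆ ℂ be bounded domains, g : X → Y a C¹ orientation-preserving diffeomorphism, f : Y → X a C¹ diffeomorphism of finite distortion, p > 1, and Φ = K_f^{p-1}. Then ∫_X K_f^{p-1}(g(z))·|Dg(z)|² dz ≤ (∫_Y K_f^p(y) dy)^{(p-1)/p} · (∫_X |Dg|^{2p}/J_g^{p-1} dz)^{1/p}. -/
open MeasureTheory Complex

noncomputable def wirtingerZ (D : ℂ →L[ℝ] ℂ) : ℂ := (D 1 - Complex.I * D Complex.I) / 2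

noncomputable def wirtingerZbar (D : ℂ →L[ℝ] ℂ) : ℂ := (D 1 + Complex.I * D Complex.I) / 2

/-- The Jacobian determinant `|f_z|² - |f_z̄|²`. -/
noncomputable def jacW (D : ℂ →L[ℝ] ℂ) : ℝ :=
  ‖wirtingerZ D‖^2 - ‖wirtingerZbar D‖^2

/-- The squared Hilbert–Schmidt norm `‖D‖² = 2(|f_z|² + |f_z̄|²)`. -/
noncomputable def hsSq (D : ℂ →L[ℝ] ℂ) : ℝ :=
  2 * (‖wirtingerZ D‖^2 + ‖wirtingerZbar D‖^2)

/-- The pointwise distortion `K = ‖D‖²/(2 det D)` when `det D > 0`, and `1` otherwise. -/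
noncomputable def distortion (D : ℂ →L[ℝ] ℂ) : ℝ :=
  if 0 < jacW D then hsSq D / (2 * jacW D) else 1

lemma det_eq_jacW (D : ℂ →L[ℝ] ℂ) : D.det = jacW D := by
  have h : D.det = LinearMap.det (D : ℂ →ₗ[ℝ] ℂ) := rfl
  rw [h, ← LinearMap.det_toMatrix Complex.basisOneI, Matrix.det_fin_two]
  simp only [LinearMap.toMatrix_apply, Complex.coe_basisOneI_repr, Complex.coe_basisOneI,
    Matrix.cons_val_zero, Matrix.cons_val_one, Matrix.head_cons, ContinuousLinearMap.coe_coe,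
    jacW, wirtingerZ, wirtingerZbar, Complex.sq_norm, Complex.normSq_apply, Complex.div_re,
    Complex.div_im, Complex.sub_re, Complex.sub_im, Complex.add_re, Complex.add_im,
    Complex.mul_re, Complex.mul_im, Complex.I_re, Complex.I_im, Complex.normSq_ofNat,
    Complex.re_ofNat, Complex.im_ofNat]
  norm_num
  ring

lemma hsSq_nonneg (D : ℂ →L[ℝ] ℂ) : 0 ≤ hsSq D := by
  unfold hsSq; positivity

lemma one_le_distortion (D : ℂ →L[ℝ] ℂ) : 1 ≤ distortion D := by
  unfold distortion
  split
  · rename_i h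
    rw [le_div_iff₀ (by linarith)]
    unfold hsSq
    unfold jacW at h ⊢
    nlinarith [sq_nonneg ‖wirtingerZbar D‖]
  · exact le_refl 1

lemma distortion_pos (D : ℂ →L[ℝ] ℂ) : 0 < distortion D :=
  lt_of_lt_of_le one_pos (one_le_distortion D)

lemma continuous_jacW : Continuous jacW := by
  have h1 : Continuous fun D : ℂ →L[ℝ] ℂ => D 1 :=
    (ContinuousLinearMap.apply ℝ ℂ (1 : ℂ)).continuous
  have hI : Continuous fun D : ℂ →L[ℝ] ℂ => D Complex.I :=
    (ContinuousLinearMap.apply ℝ ℂ (Complex.I : ℂ)).continuous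
  exact ((continuous_norm.comp ((h1.sub (continuous_const.mul hI)).div_const 2)).pow 2).sub
    ((continuous_norm.comp ((h1.add (continuous_const.mul hI)).div_const 2)).pow 2)

lemma continuous_hsSq : Continuous hsSq := by
  have h1 : Continuous fun D : ℂ →L[ℝ] ℂ => D 1 :=
    (ContinuousLinearMap.apply ℝ ℂ (1 : ℂ)).continuous
  have hI : Continuous fun D : ℂ →L[ℝ] ℂ => D Complex.I :=
    (ContinuousLinearMap.apply ℝ ℂ (Complex.I : ℂ)).continuous
  exact continuous_const.mul
    (((continuous_norm.comp ((h1.sub (continuous_const.mul hI)).div_const 2)).pow 2).add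
      ((continuous_norm.comp ((h1.add (continuous_const.mul hI)).div_const 2)).pow 2))

lemma measurable_distortion : Measurable distortion := by
  unfold distortion
  exact Measurable.ite (measurableSet_lt measurable_const continuous_jacW.measurable)
    (continuous_hsSq.measurable.div ((continuous_const.mul continuous_jacW).measurable))
    measurable_const

/-- Weighted Hölder comparison of energies (Lemma 4.1 of the paper): for a `C¹`
orientation-preserving diffeomorphism `g : X → Y`, a `C¹` diffeomorphism `f : Y → X`
of finite distortion, and `p > 1`,
`∫_X K_f^{p-1}(g)|Dg|² ≤ (∫_Y K_f^p)^{(p-1)/p} · (∫_X |Dg|^{2p}/J_g^{p-1})^{1/p}`. -/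
theorem weighted_holder_energy_comparison
    (X Y : Set ℂ) (hXo : IsOpen X) (hYo : IsOpen Y)
    (hXb : Bornology.IsBounded X) (hYb : Bornology.IsBounded Y)
    (p : ℝ) (hp : 1 < p)
    (g f : ℂ → ℂ) (Dg Df : ℂ → ℂ →L[ℝ] ℂ)
    (hg : ∀ z ∈ X, HasFDerivAt g (Dg z) z)
    (hgJ : ∀ z ∈ X, 0 < jacW (Dg z))
    (hgbij : Set.BijOn g X Y)
    (hf : ∀ y ∈ Y, HasFDerivAt f (Df y) y)
    (hfbij : Set.BijOn f Y X)
    (hint1 : IntegrableOn (fun y => distortion (Df y) ^ p) Y)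
    (hint2 : IntegrableOn (fun z => hsSq (Dg z) ^ p / (jacW (Dg z)) ^ (p - 1)) X) :
    ∫ z in X, distortion (Df (g z)) ^ (p - 1) * hsSq (Dg z)
      ≤ (∫ y in Y, distortion (Df y) ^ p) ^ ((p - 1) / p)
        * (∫ z in X, hsSq (Dg z) ^ p / (jacW (Dg z)) ^ (p - 1)) ^ (1 / p) := by
  have hXm : MeasurableSet X := hXo.measurableSet
  have hYm : MeasurableSet Y := hYo.measurableSet
  have hp0 : (0 : ℝ) < p := lt_trans one_pos hp
  have hp1 : (0 : ℝ) < p - 1 := by linarith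
  set μX := (volume : Measure ℂ).restrict X with hμX
  -- a.e. facts
  have haeX : ∀ᵐ z ∂μX, z ∈ X := ae_restrict_mem hXm
  have hDg_ae : ∀ᵐ z ∂μX, Dg z = fderiv ℝ g z :=
    haeX.mono fun z hz => ((hg z hz).fderiv).symm
  have hDfg_ae : ∀ᵐ z ∂μX, Df (g z) = fderiv ℝ f (g z) :=
    haeX.mono fun z hz => ((hf (g z) (hgbij.mapsTo hz)).fderiv).symm
  -- measurability
  have hgae : AEMeasurable g μX := by
    apply ContinuousOn.aemeasurable _ hXm
    exact fun z hz => ((hg z hz).differentiableAt.continuousAt).continuousWithinAt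
  have hK : AEMeasurable (fun z => distortion (Df (g z))) μX := by
    refine AEMeasurable.congr (f := fun z => distortion (fderiv ℝ f (g z))) ?_ ?_
    · exact (measurable_distortion.comp (measurable_fderiv ℝ f)).comp_aemeasurable hgae
    · exact hDfg_ae.mono fun z h => by simp only [h]
  have hH : AEMeasurable (fun z => hsSq (Dg z)) μX := by
    refine AEMeasurable.congr (f := fun z => hsSq (fderiv ℝ g z)) ?_ ?_
    · exact ((continuous_hsSq.measurable.comp (measurable_fderiv ℝ g))).aemeasurable
    · exact hDg_ae.mono fun z h => by simp only [h]
  have hJ : AEMeasurable (fun z => jacW (Dg z)) μX := by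
    refine AEMeasurable.congr (f := fun z => jacW (fderiv ℝ g z)) ?_ ?_
    · exact ((continuous_jacW.measurable.comp (measurable_fderiv ℝ g))).aemeasurable
    · exact hDg_ae.mono fun z h => by simp only [h]
  -- ENNReal-valued functions
  set φ : ℂ → ENNReal := fun z => ENNReal.ofReal (jacW (Dg z) * distortion (Df (g z)) ^ p)
    with hφdef
  set ψ : ℂ → ENNReal := fun z => ENNReal.ofReal (hsSq (Dg z) ^ p / jacW (Dg z) ^ (p - 1))
    with hψdef
  have hφm : AEMeasurable φ μX :=
    ENNReal.measurable_ofReal.comp_aemeasurable (hJ.mul (hK.pow aemeasurable_const))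
  have hψm : AEMeasurable ψ μX :=
    ENNReal.measurable_ofReal.comp_aemeasurable
      ((hH.pow aemeasurable_const).div (hJ.pow aemeasurable_const))
  -- pointwise identity on X
  have hpt : ∀ᵐ z ∂μX, ENNReal.ofReal (distortion (Df (g z)) ^ (p - 1) * hsSq (Dg z))
      = φ z ^ ((p - 1) / p) * ψ z ^ (1 / p) := by
    filter_upwards [haeX] with z hz
    set K := distortion (Df (g z)) with hKdef
    set J := jacW (Dg z) with hJdef
    set H := hsSq (Dg z) with hHdef
    have hJpos : 0 < J := hgJ z hz
    have hKpos : 0 < K := distortion_pos _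
    have hHnn : 0 ≤ H := hsSq_nonneg _
    have hreal : K ^ (p - 1) * H = (J * K ^ p) ^ ((p - 1) / p) * (H ^ p / J ^ (p - 1)) ^ (1 / p) := by
      rw [Real.mul_rpow hJpos.le (Real.rpow_nonneg hKpos.le _),
        Real.div_rpow (Real.rpow_nonneg hHnn _) (Real.rpow_nonneg hJpos.le _),
        ← Real.rpow_mul hKpos.le, ← Real.rpow_mul hHnn, ← Real.rpow_mul hJpos.le]
      have e1 : p * ((p - 1) / p) = p - 1 := by field_simp
      have e2 : p * (1 / p) = 1 := by field_simp
      have e3 : (p - 1) * (1 / p) = (p - 1) / p := by ring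
      rw [e1, e2, e3, Real.rpow_one]
      have hJe : J ^ ((p - 1) / p) ≠ 0 := (Real.rpow_pos_of_pos hJpos _).ne'
      field_simp
    rw [hreal, ENNReal.ofReal_mul (Real.rpow_nonneg (by positivity) _),
      hφdef, hψdef,
      ← ENNReal.ofReal_rpow_of_nonneg (by positivity) (by positivity),
      ← ENNReal.ofReal_rpow_of_nonneg (by positivity) (by positivity)]
  -- LHS as a lower Lebesgue integral
  have hLm : AEMeasurable (fun z => distortion (Df (g z)) ^ (p - 1) * hsSq (Dg z)) μX :=
    (hK.pow aemeasurable_const).mul hH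
  have hLnn : 0 ≤ᵐ[μX] fun z => distortion (Df (g z)) ^ (p - 1) * hsSq (Dg z) :=
    Filter.Eventually.of_forall fun z =>
      mul_nonneg (Real.rpow_nonneg (distortion_pos _).le _) (hsSq_nonneg _)
  have hLHS : ∫ z in X, distortion (Df (g z)) ^ (p - 1) * hsSq (Dg z)
      = (∫⁻ z, ENNReal.ofReal (distortion (Df (g z)) ^ (p - 1) * hsSq (Dg z)) ∂μX).toReal := by
    rw [integral_eq_lintegral_of_nonneg_ae hLnn hLm.aestronglyMeasurable]
  -- change of variables for the first factor
  have himg : g '' X = Y := hgbij.image_eq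
  have hCoV := lintegral_image_eq_lintegral_abs_det_fderiv_mul volume hXm
    (fun z hz => (hg z hz).hasFDerivWithinAt) hgbij.injOn
    (fun y => ENNReal.ofReal (distortion (Df y) ^ p))
  have hφeq : ∀ᵐ z ∂μX, φ z
      = ENNReal.ofReal |(Dg z).det| * ENNReal.ofReal (distortion (Df (g z)) ^ p) := by
    filter_upwards [haeX] with z hz
    rw [det_eq_jacW, abs_of_pos (hgJ z hz), hφdef, ← ENNReal.ofReal_mul (hgJ z hz).le]
  have hB : ENNReal.ofReal (∫ y in Y, distortion (Df y) ^ p)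
      = ∫⁻ y in Y, ENNReal.ofReal (distortion (Df y) ^ p) :=
    ofReal_integral_eq_lintegral_ofReal hint1
      (Filter.Eventually.of_forall fun y => Real.rpow_nonneg (distortion_pos _).le _)
  have hφint : ∫⁻ z, φ z ∂μX = ENNReal.ofReal (∫ y in Y, distortion (Df y) ^ p) := by
    rw [lintegral_congr_ae hφeq, hμX, ← hCoV, himg, ← hB]
  -- second factor
  have hψnn : 0 ≤ᵐ[μX] fun z => hsSq (Dg z) ^ p / jacW (Dg z) ^ (p - 1) := by
    filter_upwards [haeX] with z hz
    exact div_nonneg (Real.rpow_nonneg (hsSq_nonneg _) _)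
      (Real.rpow_pos_of_pos (hgJ z hz) _).le
  have hψint : ∫⁻ z, ψ z ∂μX
      = ENNReal.ofReal (∫ z in X, hsSq (Dg z) ^ p / jacW (Dg z) ^ (p - 1)) :=
    (ofReal_integral_eq_lintegral_ofReal hint2 hψnn).symm
  -- Hölder inequality
  have hpq : Real.HolderConjugate (p / (p - 1)) p :=
    Real.holderConjugate_iff.mpr ⟨(one_lt_div hp1).2 (by linarith), by
      have h1 : p ≠ 0 := hp0.ne'
      have h2 : p - 1 ≠ 0 := hp1.ne'
      rw [inv_div]
      field_simp
      ring⟩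
  have hHolder := ENNReal.lintegral_mul_le_Lp_mul_Lq μX hpq
    (hφm.pow (aemeasurable_const : AEMeasurable (fun _ : ℂ => (p - 1) / p) μX))
    (hψm.pow (aemeasurable_const : AEMeasurable (fun _ : ℂ => 1 / p) μX))
  simp only [Pi.mul_apply] at hHolder
  have hee1 : (p - 1) / p * (p / (p - 1)) = 1 := by field_simp
  have hee2 : 1 / p * p = 1 := by field_simp
  have hHolder' : ∫⁻ z, φ z ^ ((p - 1) / p) * ψ z ^ (1 / p) ∂μX
      ≤ (∫⁻ z, φ z ∂μX) ^ ((p - 1) / p) * (∫⁻ z, ψ z ∂μX) ^ (1 / p) := by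
    refine le_trans hHolder (le_of_eq ?_)
    congr 1
    · rw [one_div_div]
      congr 1
      exact lintegral_congr fun z => by
        rw [← ENNReal.rpow_mul, hee1, ENNReal.rpow_one]
    · congr 1
      exact lintegral_congr fun z => by
        rw [← ENNReal.rpow_mul, hee2, ENNReal.rpow_one]
  -- nonnegativity of the two integrals
  have hBnn : 0 ≤ ∫ y in Y, distortion (Df y) ^ p :=
    setIntegral_nonneg hYm fun y _ => Real.rpow_nonneg (distortion_pos _).le _
  have hCnn : 0 ≤ ∫ z in X, hsSq (Dg z) ^ p / jacW (Dg z) ^ (p - 1) :=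
    setIntegral_nonneg hXm fun z hz =>
      div_nonneg (Real.rpow_nonneg (hsSq_nonneg _) _) (Real.rpow_pos_of_pos (hgJ z hz) _).le
  -- conclusion
  rw [hLHS]
  have hstep : ∫⁻ z, ENNReal.ofReal (distortion (Df (g z)) ^ (p - 1) * hsSq (Dg z)) ∂μX
      ≤ ENNReal.ofReal (∫ y in Y, distortion (Df y) ^ p) ^ ((p - 1) / p)
        * ENNReal.ofReal (∫ z in X, hsSq (Dg z) ^ p / jacW (Dg z) ^ (p - 1)) ^ (1 / p) := by
    rw [lintegral_congr_ae hpt]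
    rw [← hφint, ← hψint]
    exact hHolder'
  have hfin : ENNReal.ofReal (∫ y in Y, distortion (Df y) ^ p) ^ ((p - 1) / p)
      * ENNReal.ofReal (∫ z in X, hsSq (Dg z) ^ p / jacW (Dg z) ^ (p - 1)) ^ (1 / p) ≠ ⊤ :=
    ENNReal.mul_ne_top
      (ENNReal.rpow_ne_top_of_nonneg (by positivity) ENNReal.ofReal_ne_top)
      (ENNReal.rpow_ne_top_of_nonneg (by positivity) ENNReal.ofReal_ne_top)
  refine le_trans (ENNReal.toReal_mono hfin hstep) (le_of_eq ?_)
  rw [ENNReal.toReal_mul, ← ENNReal.toReal_rpow, ← ENNReal.toReal_rpow,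
    ENNReal.toReal_ofReal hBnn, ENNReal.toReal_ofReal hCnn]
end

section
/- Energy difference lower bound: under the identity E^Φ_X[H] - E^Φ_X[h] = 4∫_X [|f_z - γ f_{z̄}|²/(|f_z|²-|f_{z̄}|²) - 1]·Φ(h)|h_z h_{z̄}| + 4∫_X Φ(h)·(|h_z|-|h_{z̄}|)²|f_{z̄}|²/(|f_z|²-|f_{z̄}|²), if additionally ∫_X (|∂_v f|²/J_f)·|φ| ≥ ∫_X |φ| where φ = Φ(h)h_z·conj(h_{z̄}) is holomorphic and |φ| = Φ(h)|h_z h_{z̄}|, then E^Φ_X[H] ≥ E^Φ_X[h]. -/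
open MeasureTheory Complex

/-!
Writing `|φ| = Φ(h)|h_z h_z̄|`, the first integral of the energy identity is
`∫ (|∂_v f|²/J_f) |φ| - ∫ |φ|`, which the trajectory estimate makes nonnegative,
and the second integrand is nonnegative because `Φ > 0` and `J_f > 0`.
-/

theorem norm_ofReal_mul_mul_conj {c : ℝ} (hc : 0 ≤ c) (a b : ℂ) :
    ‖(c : ℂ) * a * starRingEnd ℂ b‖ = c * ‖a * b‖ := by
  rw [norm_mul, norm_mul, norm_mul, RCLike.norm_conj, norm_real, Real.norm_of_nonneg hc,
    mul_assoc]

theorem setIntegral_sub_one_mul_nonneg {α : Type*} [MeasurableSpace α] {μ : Measure α}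
    {s : Set α} {q w : α → ℝ} (hqw : IntegrableOn (fun x => q x * w x) s μ)
    (hw : IntegrableOn w s μ) (h : ∫ x in s, w x ∂μ ≤ ∫ x in s, q x * w x ∂μ) :
    0 ≤ ∫ x in s, (q x - 1) * w x ∂μ := by
  have hsplit : ∫ x in s, (q x - 1) * w x ∂μ
      = (∫ x in s, q x * w x ∂μ) - ∫ x in s, w x ∂μ := by
    rw [← integral_sub hqw hw]
    simp only [sub_one_mul]
  linarith

theorem energy_difference_lower_bound_general
    (X : Set ℂ) (hX : MeasurableSet X)
    (Φh : ℂ → ℝ) (hΦ : ∀ z ∈ X, 0 < Φh z)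
    (hz hzb fz fzb φ γ : ℂ → ℂ) (Jf : ℂ → ℝ)
    (hJpos : ∀ z ∈ X, 0 < Jf z)
    (hφ : ∀ z ∈ X, φ z = (Φh z : ℂ) * hz z * (starRingEnd ℂ) (hzb z))
    (EH Eh : ℝ)
    (hident : EH - Eh
      = 4 * (∫ z in X, ((‖fz z - γ z * fzb z‖)^2 / Jf z - 1)
              * (Φh z * ‖hz z * hzb z‖))
        + 4 * (∫ z in X, Φh z * ((‖hz z‖ - ‖hzb z‖)^2
              * (‖fzb z‖)^2 / Jf z)))
    (hint1 : IntegrableOn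
      (fun z => (‖fz z - γ z * fzb z‖)^2 / Jf z * ‖φ z‖) X)
    (hint2 : IntegrableOn (fun z => ‖φ z‖) X)
    (hineq : ∫ z in X, ‖φ z‖
      ≤ ∫ z in X, (‖fz z - γ z * fzb z‖)^2 / Jf z * ‖φ z‖) :
    Eh ≤ EH := by
  have hnorm_φ : ∀ z ∈ X, Φh z * ‖hz z * hzb z‖ = ‖φ z‖ := fun z hzX => by
    rw [hφ z hzX, norm_ofReal_mul_mul_conj (hΦ z hzX).le]
  have hfirst : 0 ≤ ∫ z in X, ((‖fz z - γ z * fzb z‖)^2 / Jf z - 1)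
      * (Φh z * ‖hz z * hzb z‖) := by
    rw [setIntegral_congr_fun hX fun z hzX => by rw [hnorm_φ z hzX]]
    exact setIntegral_sub_one_mul_nonneg hint1 hint2 hineq
  have hsecond : 0 ≤ ∫ z in X, Φh z * ((‖hz z‖ - ‖hzb z‖)^2
      * (‖fzb z‖)^2 / Jf z) :=
    setIntegral_nonneg hX fun z hzX => by
      have := (hΦ z hzX).le
      have := (hJpos z hzX).le
      positivity
  linarith

/-- Energy difference lower bound: under the integral identity for
`E^Φ_X[H] - E^Φ_X[h]` and the trajectory estimate
`∫_X (|∂_v f|²/J_f)·|φ| ≥ ∫_X |φ|`, where `φ = Φ(h) h_z conj(h_z̄)` and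
`|φ| = Φ(h)|h_z h_z̄|`, one concludes `E^Φ_X[H] ≥ E^Φ_X[h]`. -/
theorem energy_difference_lower_bound
    (X : Set ℂ) (hX : MeasurableSet X)
    (Φh : ℂ → ℝ) (hΦ : ∀ z ∈ X, 0 < Φh z)
    (hz hzb fz fzb φ γ : ℂ → ℂ) (Jf : ℂ → ℝ)
    (hJf : ∀ z ∈ X, Jf z = (‖fz z‖)^2 - (‖fzb z‖)^2)
    (hJpos : ∀ z ∈ X, 0 < Jf z)
    (hγ : ∀ z ∈ X, γ z = if hz z * hzb z = 0 then 0
      else hz z * (starRingEnd ℂ) (hzb z)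
        / ((‖hz z * (starRingEnd ℂ) (hzb z)‖ : ℝ) : ℂ))
    (hφ : ∀ z ∈ X, φ z = (Φh z : ℂ) * hz z * (starRingEnd ℂ) (hzb z))
    (EH Eh : ℝ)
    (hident : EH - Eh
      = 4 * (∫ z in X, ((‖fz z - γ z * fzb z‖)^2 / Jf z - 1)
              * (Φh z * ‖hz z * hzb z‖))
        + 4 * (∫ z in X, Φh z * ((‖hz z‖ - ‖hzb z‖)^2
              * (‖fzb z‖)^2 / Jf z)))
    (hint1 : IntegrableOn
      (fun z => (‖fz z - γ z * fzb z‖)^2 / Jf z * ‖φ z‖) X)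
    (hint2 : IntegrableOn (fun z => ‖φ z‖) X)
    (hineq : ∫ z in X, ‖φ z‖
      ≤ ∫ z in X, (‖fz z - γ z * fzb z‖)^2 / Jf z * ‖φ z‖) :
    Eh ≤ EH :=
  energy_difference_lower_bound_general X hX Φh hΦ hz hzb fz fzb φ γ Jf hJpos hφ EH Eh hident hint1
    hint2 hineq
end

section
/- If f and f̃ are both minimizers of the L^p-mean distortion E_p over Diff^p_{f_0}(Y̅, X̅) (p > 1), and h = f⁻¹ is the unique minimizer of the auxiliary Φ-weighted Dirichlet energy E^Φ_X with Φ = K_f^{p-1}, then from E^Φ_X[h] ≤ E^Φ_X[h̃] ≤ E_p[f]^{(p-1)/p}·E_p[f̃]^{1/p} = E_p[f] = E^Φ_X[h] it follows that h̃ = h, hence f̃ = f. -/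
/-!
Since `E_p[f̃] = E_p[f]`, the Hölder exponents `(p-1)/p` and `1/p` recombine, so the comparison
gives `E^Φ_X[h̃] ≤ E_p[f] = E^Φ_X[h]`. Thus `h̃` is also a minimizer of `E^Φ_X`, hence `h̃ = h` by
uniqueness, and `f̃ = f` because both are inverse to the same map.
-/

open Set

theorem Real.rpow_sub_one_div_mul_rpow_one_div {a p : ℝ} (ha : 0 ≤ a) (hp : p ≠ 0) :
    a ^ ((p - 1) / p) * a ^ (1 / p) = a := by
  have hsum : (p - 1) / p + 1 / p = 1 := by field_simp; ring
  rw [← Real.rpow_add' ha (by rw [hsum]; exact one_ne_zero), hsum, Real.rpow_one]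

theorem eqOn_of_le_of_unique_minimizer {α β γ : Type*} [PartialOrder γ] {E : (α → β) → γ}
    {S : Set (α → β)} {X : Set α} {g h : α → β} (hmin : ∀ g ∈ S, E h ≤ E g)
    (huniq : ∀ g ∈ S, E g = E h → EqOn g h X) (hg : g ∈ S) (hle : E g ≤ E h) : EqOn g h X :=
  huniq g hg (le_antisymm hle (hmin g hg))

theorem unique_minimizer_final_argument_general
    (X Y : Set ℂ) (p : ℝ) (hp : 1 < p)
    (f ftil h htil : ℂ → ℂ)
    (S : Set (ℂ → ℂ))
    (EΦ : (ℂ → ℂ) → ℝ) (Ep : (ℂ → ℂ) → ℝ)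
    (hftilmaps : Set.MapsTo ftil Y X)
    (hinv : Set.InvOn h f Y X) (hinvtil : Set.InvOn htil ftil Y X)
    (hStil : htil ∈ S)
    (hEppos : 0 < Ep f)
    (hEpeq : Ep f = Ep ftil)
    (hmin : ∀ g ∈ S, EΦ h ≤ EΦ g)
    (huniq : ∀ g ∈ S, EΦ g = EΦ h → Set.EqOn g h X)
    (hcomp : EΦ htil ≤ Ep f ^ ((p - 1) / p) * Ep ftil ^ (1 / p))
    (hident : EΦ h = Ep f) :
    Set.EqOn htil h X ∧ Set.EqOn ftil f Y := by
  have hle : EΦ htil ≤ EΦ h := by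
    rwa [← hEpeq, Real.rpow_sub_one_div_mul_rpow_one_div hEppos.le (by linarith), ← hident]
      at hcomp
  have hEq : EqOn htil h X := eqOn_of_le_of_unique_minimizer hmin huniq hStil hle
  exact ⟨hEq,
    (eqOn_of_leftInvOn_of_rightInvOn hinv.2 (hinvtil.1.congr_left hftilmaps hEq) hftilmaps).symm⟩

/-- Uniqueness of the diffeomorphic minimizer (Theorem 1.2, final argument): if `f` and `f̃`
are both minimizers of the `L^p`-mean distortion (`E_p[f] = E_p[f̃]`, both positive), `h = f⁻¹`
is a minimizer of the auxiliary `Φ`-weighted Dirichlet energy `E^Φ_X` on the class `S`, whose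
minimizer is unique (any `g ∈ S` with `E^Φ_X[g] = E^Φ_X[h]` agrees with `h` on `X`), `h̃ = f̃⁻¹`
lies in `S`, the comparison `E^Φ_X[h̃] ≤ E_p[f]^{(p-1)/p}·E_p[f̃]^{1/p}` holds, and
`E^Φ_X[h] = E_p[f]`, then `h̃ = h` on `X`, hence `f̃ = f` on `Y`. -/
theorem unique_minimizer_final_argument
    (X Y : Set ℂ) (p : ℝ) (hp : 1 < p)
    (f ftil h htil : ℂ → ℂ)
    (S : Set (ℂ → ℂ))
    (EΦ : (ℂ → ℂ) → ℝ) (Ep : (ℂ → ℂ) → ℝ)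
    (hfmaps : Set.MapsTo f Y X) (hftilmaps : Set.MapsTo ftil Y X)
    (hinv : Set.InvOn h f Y X) (hinvtil : Set.InvOn htil ftil Y X)
    (hS : h ∈ S) (hStil : htil ∈ S)
    (hEppos : 0 < Ep f)
    (hEpeq : Ep f = Ep ftil)
    (hmin : ∀ g ∈ S, EΦ h ≤ EΦ g)
    (huniq : ∀ g ∈ S, EΦ g = EΦ h → Set.EqOn g h X)
    (hcomp : EΦ htil ≤ Ep f ^ ((p - 1) / p) * Ep ftil ^ (1 / p))
    (hident : EΦ h = Ep f) :
    Set.EqOn htil h X ∧ Set.EqOn ftil f Y :=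
  unique_minimizer_final_argument_general X Y p hp f ftil h htil S EΦ Ep hftilmaps hinv hinvtil
    hStil hEppos hEpeq hmin huniq hcomp hident
end

section
/- Change of variables along vertical trajectories: if f : X → X is a C¹ orientation-preserving diffeomorphism, φ holomorphic on X, γ a vertical trajectory of φ dz⊗dz on which f is C¹, and ∂_v f = f_z - (φ/|φ|)f_{z̄}, then ∫_γ |∂_v f|·√(|φ∘f|) |dz| = ∫_{f(γ)} √|φ| |dz|. -/
/-!
Along a vertical trajectory `γ'² φ(γ)` is a negative real, so `(φ/|φ|) γ' = -conj γ'`. Writing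
the real differential as `Df w = f_z w + f_z̄ w̄`, the chain rule gives
`(f ∘ γ)' = f_z γ' + f_z̄ conj γ' = ∂_v f · γ'`, so the two integrands agree pointwise.
-/

open Complex intervalIntegral

open ComplexConjugate

theorem ContinuousLinearMap.apply_eq_wirtingerZ_add_wirtingerZbar (D : ℂ →L[ℝ] ℂ) (w : ℂ) :
    D w = wirtingerZ D * w + wirtingerZbar D * conj w := by
  have hD : D w = w.re * D 1 + w.im * D I := by
    conv_lhs => rw [show w = w.re • (1 : ℂ) + w.im • I by simp [real_smul, re_add_im]]
    rw [map_add, map_smul, map_smul, real_smul, real_smul]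
  rw [hD, wirtingerZ, wirtingerZbar]
  conv_rhs => rw [← re_add_im w]
  simp only [map_add, map_mul, conj_ofReal, conj_I]
  linear_combination (w.im * D I) * I_sq

theorem sq_mul_eq_neg_norm_sq_mul_norm {c p : ℂ} (him : (c ^ 2 * p).im = 0)
    (hre : (c ^ 2 * p).re < 0) : c ^ 2 * p = -((‖c‖ ^ 2 * ‖p‖ : ℝ) : ℂ) := by
  rw [← norm_pow, ← norm_mul, ← abs_re_eq_norm.mpr him, abs_of_neg hre]
  apply Complex.ext <;> simp [him]

theorem div_norm_mul_eq_neg_conj {c p : ℂ} (him : (c ^ 2 * p).im = 0)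
    (hre : (c ^ 2 * p).re < 0) : p / (‖p‖ : ℂ) * c = -conj c := by
  have hc : c ≠ 0 := by rintro rfl; simp at hre
  have hp : (‖p‖ : ℂ) ≠ 0 := by rintro h; simp_all
  have hpc : p * c = -conj c * ‖p‖ := by
    refine mul_right_cancel₀ hc ?_
    calc p * c * c = c ^ 2 * p := by ring
      _ = -(conj c * c) * ‖p‖ := by
        rw [sq_mul_eq_neg_norm_sq_mul_norm him hre, conj_mul']
        push_cast
        ring
      _ = -conj c * ‖p‖ * c := by ring
  rw [div_mul_eq_mul_div, div_eq_iff hp, hpc]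

noncomputable def verticalDerivative (D : ℂ →L[ℝ] ℂ) (p : ℂ) : ℂ :=
  wirtingerZ D - p / (‖p‖ : ℂ) * wirtingerZbar D

theorem verticalDerivative_mul_eq_apply (D : ℂ →L[ℝ] ℂ) {c p : ℂ} (him : (c ^ 2 * p).im = 0)
    (hre : (c ^ 2 * p).re < 0) : verticalDerivative D p * c = D c := by
  rw [D.apply_eq_wirtingerZ_add_wirtingerZbar, verticalDerivative,
    sub_mul, mul_right_comm, div_norm_mul_eq_neg_conj him hre]
  ring

theorem change_of_variables_along_vertical_trajectory_general
    (X : Set ℂ)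
    (f : ℂ → ℂ) (Df : ℂ → ℂ →L[ℝ] ℂ)
    (hf : ∀ z ∈ X, HasFDerivAt f (Df z) z)
    (φ : ℂ → ℂ)
    (a b : ℝ) (hab : a ≤ b)
    (γ : ℝ → ℂ) (hγX : ∀ t ∈ Set.Icc a b, γ t ∈ X)
    (hγdiff : ∀ t ∈ Set.Icc a b, DifferentiableAt ℝ γ t)
    (hvert : ∀ t ∈ Set.Icc a b,
      ((deriv γ t)^2 * φ (γ t)).im = 0 ∧ ((deriv γ t)^2 * φ (γ t)).re < 0) :
    ∫ t in a..b,
        ‖wirtingerZ (Df (γ t))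
            - φ (γ t) / ((‖φ (γ t)‖ : ℝ) : ℂ) * wirtingerZbar (Df (γ t))‖
          * Real.sqrt ‖φ (f (γ t))‖ * ‖deriv γ t‖
      = ∫ t in a..b,
          Real.sqrt ‖φ ((f ∘ γ) t)‖ * ‖deriv (f ∘ γ) t‖ := by
  refine integral_congr fun t ht => ?_
  rw [Set.uIcc_of_le hab] at ht
  obtain ⟨him, hre⟩ := hvert t ht
  have hchain : HasDerivAt (f ∘ γ) (Df (γ t) (deriv γ t)) t :=
    (hf _ (hγX t ht)).comp_hasDerivAt t (hγdiff t ht).hasDerivAt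
  rw [hchain.deriv, ← verticalDerivative_mul_eq_apply _ him hre, norm_mul, verticalDerivative,
    Function.comp_apply]
  ring

/-- Change of variables along vertical trajectories (identity (3.8)): if `f` is a `C¹`
orientation-preserving diffeomorphism, `φ` is holomorphic, `γ` is a vertical trajectory of
`φ dz⊗dz` and `∂_v f = f_z - (φ/|φ|) f_z̄`, then
`∫_γ |∂_v f|·√|φ∘f| |dz| = ∫_{f(γ)} √|φ| |dz|`. -/
theorem change_of_variables_along_vertical_trajectory
    (X : Set ℂ) (hX : IsOpen X)
    (f : ℂ → ℂ) (Df : ℂ → ℂ →L[ℝ] ℂ)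
    (hf : ∀ z ∈ X, HasFDerivAt f (Df z) z)
    (hfJ : ∀ z ∈ X, 0 < ‖wirtingerZ (Df z)‖^2
      - ‖wirtingerZbar (Df z)‖^2)
    (φ : ℂ → ℂ) (hφ : DifferentiableOn ℂ φ X)
    (a b : ℝ) (hab : a ≤ b)
    (γ : ℝ → ℂ) (hγX : ∀ t ∈ Set.Icc a b, γ t ∈ X)
    (hγdiff : ∀ t ∈ Set.Icc a b, DifferentiableAt ℝ γ t)
    (hvert : ∀ t ∈ Set.Icc a b,
      ((deriv γ t)^2 * φ (γ t)).im = 0 ∧ ((deriv γ t)^2 * φ (γ t)).re < 0) :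
    ∫ t in a..b,
        ‖wirtingerZ (Df (γ t))
            - φ (γ t) / ((‖φ (γ t)‖ : ℝ) : ℂ) * wirtingerZbar (Df (γ t))‖
          * Real.sqrt ‖φ (f (γ t))‖ * ‖deriv γ t‖
      = ∫ t in a..b,
          Real.sqrt ‖φ ((f ∘ γ) t)‖ * ‖deriv (f ∘ γ) t‖ :=
  change_of_variables_along_vertical_trajectory_general X f Df hf φ a b hab γ hγX hγdiff hvert
end
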